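/- Under the hypotheses of the previous rotation identity, if in addition the holomorphic sectional curvatures R(e_1,\bar e_1,e_1,\bar e_1) and R(e_2,\bar e_2,e_2,\bar e_2) are strictly positive and θ ∈ (0, π/2), then R(ẽ_1,\bar ẽ_1,ẽ_2,\bar ẽ_2) > 0; in particular the vanishing of the bisectional curvature at the rotated pair contradicts positive holomorphic sectional curvature. -/
import Mathlib


open scoped InnerProductSpace ComplexConjugate

/-- An algebraic Kähler curvature tensor on a complex inner product space `V`:
`R X Y Z W` stands for `R(X, Ȳ, Z, W̄)`; it is ℂ-linear in the 1st and 3rd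
arguments, conjugate-linear in the 2nd and 4th, and satisfies the Kähler
symmetries. -/
structure IsAlgKahlerCurvature (V : Type*) [NormedAddCommGroup V]
    [InnerProductSpace ℂ V] (R : V → V → V → V → ℂ) : Prop where
  lin1 : ∀ Y Z W, IsLinearMap ℂ fun X => R X Y Z W
  lin3 : ∀ X Y W, IsLinearMap ℂ fun Z => R X Y Z W
  add2 : ∀ X Y Y' Z W, R X (Y + Y') Z W = R X Y Z W + R X Y' Z W
  conjSmul2 : ∀ X (c : ℂ) Y Z W, R X (c • Y) Z W = conj c * R X Y Z W
  add4 : ∀ X Y Z W W', R X Y Z (W + W') = R X Y Z W + R X Y Z W'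
  conjSmul4 : ∀ X Y Z (c : ℂ) W, R X Y Z (c • W) = conj c * R X Y Z W
  symm13 : ∀ X Y Z W, R X Y Z W = R Z Y X W
  symm24 : ∀ X Y Z W, R X Y Z W = R X W Z Y
  conjSymm : ∀ X Y Z W, conj (R X Y Z W) = R Y X W Z

/-- In the setting of the rotation identity (orthonormal null pair
`e₁, e₂` for an algebraic Kähler curvature tensor `R`), if moreover the holomorphic
sectional curvatures `R(e₁,ē₁,e₁,ē₁)` and `R(e₂,ē₂,e₂,ē₂)` are strictly positive
and `θ ∈ (0, π/2)`, then the bisectional curvature of the rotated pair is strictly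
positive: `R(ẽ₁,ẽ̄₁,ẽ₂,ẽ̄₂) > 0` (it is a real number with positive real part);
in particular its vanishing contradicts positive holomorphic sectional curvature. -/
theorem rotated_bisectional_positive {V : Type*} [NormedAddCommGroup V]
    [InnerProductSpace ℂ V] (R : V → V → V → V → ℂ)
    (hR : IsAlgKahlerCurvature V R) (e₁ e₂ : V)
    (he₁ : ⟪e₁, e₁⟫_ℂ = 1) (he₂ : ⟪e₂, e₂⟫_ℂ = 1) (he₁₂ : ⟪e₁, e₂⟫_ℂ = 0)
    (hnull : R e₁ e₁ e₂ e₂ = 0)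
    (hnull2 : ∀ u v : V, R e₁ e₂ u v = 0)
    (hnull3 : ∀ u : V, R e₁ e₁ e₂ u = 0)
    (hnull4 : ∀ u : V, R e₂ e₂ e₁ u = 0)
    (hpos₁ : 0 < (R e₁ e₁ e₁ e₁).re) (hpos₂ : 0 < (R e₂ e₂ e₂ e₂).re)
    (θ : ℝ) (hθ : θ ∈ Set.Ioo 0 (Real.pi / 2)) :
    0 < (R ((Real.cos θ : ℂ) • e₁ + (Real.sin θ : ℂ) • e₂)
          ((Real.cos θ : ℂ) • e₁ + (Real.sin θ : ℂ) • e₂)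
          (-(Real.sin θ : ℂ) • e₁ + (Real.cos θ : ℂ) • e₂)
          (-(Real.sin θ : ℂ) • e₁ + (Real.cos θ : ℂ) • e₂)).re ∧
    (R ((Real.cos θ : ℂ) • e₁ + (Real.sin θ : ℂ) • e₂)
          ((Real.cos θ : ℂ) • e₁ + (Real.sin θ : ℂ) • e₂)
          (-(Real.sin θ : ℂ) • e₁ + (Real.cos θ : ℂ) • e₂)
          (-(Real.sin θ : ℂ) • e₁ + (Real.cos θ : ℂ) • e₂)).im = 0 := by
  obtain ⟨hθ0, hθ1⟩ := hθ
  have hc : 0 < Real.cos θ := Real.cos_pos_of_mem_Ioo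
    ⟨by linarith [Real.pi_pos], hθ1⟩
  have hs : 0 < Real.sin θ := Real.sin_pos_of_pos_of_lt_pi hθ0
    (by linarith [Real.pi_pos])
  set c := Real.cos θ
  set s := Real.sin θ
  have add1 : ∀ X X' Y Z W, R (X + X') Y Z W = R X Y Z W + R X' Y Z W :=
    fun X X' Y Z W => (hR.lin1 Y Z W).map_add X X'
  have smul1 : ∀ (a : ℂ) X Y Z W, R (a • X) Y Z W = a * R X Y Z W :=
    fun a X Y Z W => (hR.lin1 Y Z W).map_smul a X
  have add3 : ∀ X Y Z Z' W, R X Y (Z + Z') W = R X Y Z W + R X Y Z' W :=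
    fun X Y Z Z' W => (hR.lin3 X Y W).map_add Z Z'
  have smul3 : ∀ X Y (a : ℂ) Z W, R X Y (a • Z) W = a * R X Y Z W :=
    fun X Y a Z W => (hR.lin3 X Y W).map_smul a Z
  have hz : ∀ u v, R e₂ e₁ u v = 0 := fun u v => by
    rw [← hR.conjSymm e₁ e₂ v u, hnull2, map_zero]
  have h1112 : R e₁ e₁ e₁ e₂ = 0 := by rw [hR.symm24]; exact hnull2 e₁ e₁
  have h2221 : R e₂ e₂ e₂ e₁ = 0 := by rw [hR.symm24]; exact hz e₂ e₂
  have key : R ((c : ℂ) • e₁ + (s : ℂ) • e₂) ((c : ℂ) • e₁ + (s : ℂ) • e₂)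
      (-(s : ℂ) • e₁ + (c : ℂ) • e₂) (-(s : ℂ) • e₁ + (c : ℂ) • e₂)
      = ((c * s)^2 : ℝ) * (R e₁ e₁ e₁ e₁ + R e₂ e₂ e₂ e₂) := by
    simp only [add1, smul1, hR.add2, hR.conjSmul2, add3, smul3, hR.add4,
      hR.conjSmul4, Complex.conj_ofReal, map_neg, hnull, hnull2, hnull3,
      hnull4, hz, h1112, h2221, mul_zero, add_zero, zero_add, neg_neg,
      mul_neg, neg_zero]
    push_cast
    ring
  have him1 : (R e₁ e₁ e₁ e₁).im = 0 := by
    have := hR.conjSymm e₁ e₁ e₁ e₁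
    rw [Complex.conj_eq_iff_im] at this
    exact this
  have him2 : (R e₂ e₂ e₂ e₂).im = 0 := by
    have := hR.conjSymm e₂ e₂ e₂ e₂
    rw [Complex.conj_eq_iff_im] at this
    exact this
  rw [key]
  constructor
  · simp only [Complex.re_ofReal_mul, Complex.add_re]
    positivity
  · rw [Complex.im_ofReal_mul]
    simp [him1, him2]
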